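/- arXiv:1605.02363 — 2 statements merged into one kernel-verified Lean document; each statement's English description precedes it below -/
import Mathlib

section
/- Let Λ : (0,R₀] → [0,∞) be non-decreasing with Λ(R₀) < 1/1000 and R₀ < 1. Fix r ∈ (0, R₀], set a = 4Λ(r)r and y₀ = (0,...,0,−a) ∈ ℝⁿ. Let φ : ℝ^{n−1} → ℝ with φ(0) = 0, and suppose for every x' with |x'| ≤ r: |φ(x')| ≤ (3/2)Λ(r)r, and the unit normal ν(x) = (−D'φ(x'), 1)/√(1+|D'φ(x')|²) at x = (x', φ(x')) satisfies |ν(x) − eₙ| ≤ Λ(r). Then for every such boundary point x with |x| ≤ r one has (rΛ(r))/2 ≤ ⟨x − y₀, ν(x)⟩ ≤ 10 rΛ(r). -/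
/-!
Since `ν(x)` lies within `Λ(r)` of `eₙ`, Cauchy–Schwarz shows that `⟨x - y₀, ν(x)⟩` differs from
`⟨x - y₀, eₙ⟩ = φ(x') + 4Λ(r)r ∈ [5/2, 11/2] · rΛ(r)` by at most
`|x - y₀| Λ(r) ≤ (1 + 4Λ(r)) rΛ(r)`, which is tiny because `Λ(r) ≤ Λ(R₀) < 1/1000`.
-/

open scoped RealInnerProductSpace

lemma abs_inner_sub_inner_le_norm_mul_norm {E : Type*} [NormedAddCommGroup E]
    [InnerProductSpace ℝ E] (z u v : E) : |⟪z, u⟫ - ⟪z, v⟫| ≤ ‖z‖ * ‖u - v‖ := by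
  rw [← inner_sub_right]
  exact abs_real_inner_le_norm z (u - v)

section Snoc

variable {m : ℕ}

lemma EuclideanSpace.norm_toLp_snoc_sq (x : EuclideanSpace ℝ (Fin m)) (a : ℝ) :
    ‖(WithLp.toLp 2 (Fin.snoc (WithLp.ofLp x) a : Fin (m + 1) → ℝ) : EuclideanSpace ℝ (Fin (m + 1)))‖ ^ 2
      = ‖x‖ ^ 2 + a ^ 2 := by
  simp only [EuclideanSpace.norm_sq_eq, Real.norm_eq_abs, sq_abs, Fin.sum_univ_castSucc,
    Fin.snoc_castSucc, Fin.snoc_last]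

lemma EuclideanSpace.norm_le_norm_toLp_snoc (x : EuclideanSpace ℝ (Fin m)) (a : ℝ) :
    ‖x‖ ≤ ‖(WithLp.toLp 2 (Fin.snoc (WithLp.ofLp x) a : Fin (m + 1) → ℝ) :
      EuclideanSpace ℝ (Fin (m + 1)))‖ := by
  refine le_of_sq_le_sq ?_ (norm_nonneg _)
  rw [EuclideanSpace.norm_toLp_snoc_sq]
  exact le_add_of_nonneg_right (sq_nonneg a)

lemma EuclideanSpace.inner_toLp_snoc_single_last (x : EuclideanSpace ℝ (Fin m)) (a : ℝ) :
    ⟪(WithLp.toLp 2 (Fin.snoc (WithLp.ofLp x) a : Fin (m + 1) → ℝ) : EuclideanSpace ℝ (Fin (m + 1))),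
      EuclideanSpace.single (Fin.last m) 1⟫ = a := by
  simp [EuclideanSpace.inner_single_right]

end Snoc

theorem stmt10_general {m : ℕ} (Λ : ℝ → ℝ) (R₀ : ℝ)
    (hmono : ∀ s t : ℝ, 0 < s → s ≤ t → t ≤ R₀ → Λ s ≤ Λ t)
    (hsmall : Λ R₀ < 1 / 1000)
    (r : ℝ) (hr0 : 0 < r) (hrR : r ≤ R₀)
    (φ : EuclideanSpace ℝ (Fin m) → ℝ)
    (ν : EuclideanSpace ℝ (Fin m) → EuclideanSpace ℝ (Fin (m + 1)))
    (hφb : ∀ x' : EuclideanSpace ℝ (Fin m), ‖x'‖ ≤ r → |φ x'| ≤ 3 / 2 * Λ r * r)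
    (hνe : ∀ x' : EuclideanSpace ℝ (Fin m), ‖x'‖ ≤ r →
      ‖ν x' - EuclideanSpace.single (Fin.last m) (1 : ℝ)‖ ≤ Λ r) :
    ∀ x' : EuclideanSpace ℝ (Fin m),
      ‖(show EuclideanSpace ℝ (Fin (m + 1)) from WithLp.toLp 2 (Fin.snoc (WithLp.ofLp x') (φ x') : Fin (m + 1) → ℝ))‖ ≤ r →
      r * Λ r / 2 ≤
          ⟪(show EuclideanSpace ℝ (Fin (m + 1)) from WithLp.toLp 2 (Fin.snoc (WithLp.ofLp x') (φ x') : Fin (m + 1) → ℝ)) -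
              (-(4 * Λ r * r) • EuclideanSpace.single (Fin.last m) (1 : ℝ)), ν x'⟫ ∧
        ⟪(show EuclideanSpace ℝ (Fin (m + 1)) from WithLp.toLp 2 (Fin.snoc (WithLp.ofLp x') (φ x') : Fin (m + 1) → ℝ)) -
              (-(4 * Λ r * r) • EuclideanSpace.single (Fin.last m) (1 : ℝ)), ν x'⟫ ≤
          10 * r * Λ r := by
  intro x' hx
  set e : EuclideanSpace ℝ (Fin (m + 1)) := EuclideanSpace.single (Fin.last m) 1
  set x : EuclideanSpace ℝ (Fin (m + 1)) := WithLp.toLp 2 (Fin.snoc (WithLp.ofLp x') (φ x'))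
  set y₀ : EuclideanSpace ℝ (Fin (m + 1)) := -(4 * Λ r * r) • e with hy₀
  have hx' : ‖x'‖ ≤ r := (EuclideanSpace.norm_le_norm_toLp_snoc x' (φ x')).trans hx
  have hνL := hνe x' hx'
  have hL0 : 0 ≤ Λ r := (norm_nonneg _).trans hνL
  have hL : Λ r < 1 / 1000 := (hmono r R₀ hr0 hrR le_rfl).trans_lt hsmall
  have hφ := abs_le.mp (hφb x' hx')
  have hinner_e : ⟪x - y₀, e⟫ = φ x' + 4 * Λ r * r := by
    rw [hy₀, inner_sub_left, real_inner_smul_left, EuclideanSpace.inner_toLp_snoc_single_last,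
      real_inner_self_eq_norm_sq, PiLp.norm_single, norm_one]
    ring
  have hnorm : ‖x - y₀‖ ≤ r + 4 * Λ r * r := by
    refine (norm_sub_le _ _).trans ?_
    simp only [hy₀, e, norm_smul, norm_neg, PiLp.norm_single, norm_one, mul_one,
      Real.norm_eq_abs, abs_of_nonneg (by positivity : 0 ≤ 4 * Λ r * r)]
    linarith
  have hdev := abs_le.mp <| (abs_inner_sub_inner_le_norm_mul_norm (x - y₀) (ν x') e).trans
    (mul_le_mul hnorm hνL (norm_nonneg _) (by positivity))
  rw [hinner_e] at hdev
  have hdev_small : (r + 4 * Λ r * r) * Λ r ≤ 2 * (r * Λ r) := by nlinarith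
  constructor <;> linarith

theorem stmt10 {m : ℕ} (Λ : ℝ → ℝ) (R₀ : ℝ) (hR₀0 : 0 < R₀) (hR₀1 : R₀ < 1)
    (hmono : ∀ s t : ℝ, 0 < s → s ≤ t → t ≤ R₀ → Λ s ≤ Λ t)
    (hnn : ∀ s : ℝ, 0 ≤ Λ s) (hsmall : Λ R₀ < 1 / 1000)
    (r : ℝ) (hr0 : 0 < r) (hrR : r ≤ R₀)
    (φ : EuclideanSpace ℝ (Fin m) → ℝ) (hφ0 : φ 0 = 0)
    (g : EuclideanSpace ℝ (Fin m) → EuclideanSpace ℝ (Fin m))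
    (ν : EuclideanSpace ℝ (Fin m) → EuclideanSpace ℝ (Fin (m + 1)))
    (hν : ∀ x', ν x' =
      (Real.sqrt (1 + ‖g x'‖ ^ 2))⁻¹ •
        (show EuclideanSpace ℝ (Fin (m + 1)) from WithLp.toLp 2 (Fin.snoc (WithLp.ofLp (-(g x'))) 1 : Fin (m + 1) → ℝ)))
    (hφb : ∀ x' : EuclideanSpace ℝ (Fin m), ‖x'‖ ≤ r → |φ x'| ≤ 3 / 2 * Λ r * r)
    (hνe : ∀ x' : EuclideanSpace ℝ (Fin m), ‖x'‖ ≤ r →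
      ‖ν x' - EuclideanSpace.single (Fin.last m) (1 : ℝ)‖ ≤ Λ r) :
    ∀ x' : EuclideanSpace ℝ (Fin m),
      ‖(show EuclideanSpace ℝ (Fin (m + 1)) from WithLp.toLp 2 (Fin.snoc (WithLp.ofLp x') (φ x') : Fin (m + 1) → ℝ))‖ ≤ r →
      r * Λ r / 2 ≤
          ⟪(show EuclideanSpace ℝ (Fin (m + 1)) from WithLp.toLp 2 (Fin.snoc (WithLp.ofLp x') (φ x') : Fin (m + 1) → ℝ)) -
              (-(4 * Λ r * r) • EuclideanSpace.single (Fin.last m) (1 : ℝ)), ν x'⟫ ∧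
        ⟪(show EuclideanSpace ℝ (Fin (m + 1)) from WithLp.toLp 2 (Fin.snoc (WithLp.ofLp x') (φ x') : Fin (m + 1) → ℝ)) -
              (-(4 * Λ r * r) • EuclideanSpace.single (Fin.last m) (1 : ℝ)), ν x'⟫ ≤
          10 * r * Λ r :=
  stmt10_general Λ R₀ hmono hsmall r hr0 hrR φ ν hφb hνe
end

section
/- Let H : (0,R) → (0,∞) be differentiable, α > −1, and suppose (d/dr) log(H(r)/r^{2α+n}) = O(r) + N(r)/((α+1)r) on (0,R), where |O(r)| ≤ C̄ uniformly and N : (0,R) → ℝ satisfies N(s) ≤ C̄'(N(t) + C₂M) whenever 0 < s < t < R, for constants C̄' ≥ 1, C₂, M > 0. Then for 0 < r₁ < r₂ < R: log(H(r₂)/H(r₁)) ≤ (2α+n) log(r₂/r₁) + (C̄'/(α+1))(N(r₂) + C₂M) log(r₂/r₁) + C̄(r₂ − r₁). -/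
/-! On `[r₁, r₂]` the almost-monotonicity of `N` with `t = r₂` bounds the logarithmic derivative
of `H r / r ^ (2α + n)` by `C̄ + K / r` with the constant `K = C̄' (N r₂ + C₂ M) / (α + 1)`;
comparing with `K log r + C̄ r` integrates this to the claim. -/

open Real Set

theorem sub_le_mul_log_div_add_of_hasDerivAt_le {f f' : ℝ → ℝ} {a b c d : ℝ}
    (ha : 0 < a) (hab : a ≤ b) (hf : ∀ x ∈ Icc a b, HasDerivAt f (f' x) x)
    (hf' : ∀ x ∈ Ioo a b, f' x ≤ c / x + d) :
    f b - f a ≤ c * log (b / a) + d * (b - a) := by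
  set g : ℝ → ℝ := fun x => f x - (c * log x + d * x)
  have hg : ∀ x ∈ Icc a b, HasDerivAt g (f' x - (c / x + d)) x := fun x hx => by
    have hlog := (hasDerivAt_log (ha.trans_le hx.1).ne').const_mul c
    have hlin := (hasDerivAt_id x).const_mul d
    exact ((hf x hx).sub (hlog.add hlin)).congr_deriv (by rw [div_eq_mul_inv, mul_one])
  have hanti : AntitoneOn g (Icc a b) := by
    refine antitoneOn_of_hasDerivWithinAt_nonpos (f' := fun x => f' x - (c / x + d))
      (convex_Icc a b) (fun x hx => (hg x hx).continuousAt.continuousWithinAt)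
      (fun x hx => ?_) (fun x hx => ?_)
    all_goals rw [interior_Icc] at hx
    · exact (hg x (Ioo_subset_Icc_self hx)).hasDerivWithinAt
    · exact sub_nonpos.mpr (hf' x hx)
  have hgba : g b ≤ g a := hanti (left_mem_Icc.mpr hab) (right_mem_Icc.mpr hab) hab
  rw [log_div (ha.trans_le hab).ne' ha.ne']
  simp only [g] at hgba
  linarith

theorem log_div_rpow_sub_log_div_rpow {x y r₁ r₂ : ℝ} (p : ℝ) (hx : 0 < x) (hy : 0 < y)
    (hr₁ : 0 < r₁) (hr₂ : 0 < r₂) :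
    log (y / r₂ ^ p) - log (x / r₁ ^ p) = log (y / x) - p * log (r₂ / r₁) := by
  rw [log_div hy.ne' (rpow_pos_of_pos hr₂ p).ne', log_div hx.ne' (rpow_pos_of_pos hr₁ p).ne',
    log_rpow hr₂, log_rpow hr₁, log_div hy.ne' hx.ne', log_div hr₂.ne' hr₁.ne']
  ring

theorem stmt18_general (n : ℕ) (H N O : ℝ → ℝ) (R α Cbar Cbar' C₂ M : ℝ)
    (hα : -1 < α)
    (hHpos : ∀ r ∈ Set.Ioo (0 : ℝ) R, 0 < H r)
    (hO : ∀ r ∈ Set.Ioo (0 : ℝ) R, |O r| ≤ Cbar)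
    (hderiv : ∀ r ∈ Set.Ioo (0 : ℝ) R,
      HasDerivAt (fun s => Real.log (H s / s ^ (2 * α + n)))
        (O r + N r / ((α + 1) * r)) r)
    (hNmono : ∀ s t : ℝ, 0 < s → s < t → t < R → N s ≤ Cbar' * (N t + C₂ * M)) :
    ∀ r₁ r₂ : ℝ, 0 < r₁ → r₁ < r₂ → r₂ < R →
      Real.log (H r₂ / H r₁) ≤
        (2 * α + n) * Real.log (r₂ / r₁) +
          Cbar' / (α + 1) * (N r₂ + C₂ * M) * Real.log (r₂ / r₁) +
          Cbar * (r₂ - r₁) := by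
  intro r₁ r₂ hr₁ h12 h2R
  have hα1 : 0 < α + 1 := by linarith
  have hsub : Icc r₁ r₂ ⊆ Ioo 0 R := fun x hx => ⟨hr₁.trans_le hx.1, hx.2.trans_lt h2R⟩
  have hbound : ∀ x ∈ Ioo r₁ r₂, O x + N x / ((α + 1) * x) ≤
      Cbar' / (α + 1) * (N r₂ + C₂ * M) / x + Cbar := fun x hx => by
    have hx0 : 0 < x := hr₁.trans hx.1
    have hOx : O x ≤ Cbar := (abs_le.mp (hO x (hsub (Ioo_subset_Icc_self hx)))).2
    have hNx : N x / ((α + 1) * x) ≤ Cbar' / (α + 1) * (N r₂ + C₂ * M) / x := by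
      rw [← div_div, div_le_div_iff_of_pos_right hx0, div_mul_eq_mul_div,
        div_le_div_iff_of_pos_right hα1]
      exact hNmono x r₂ hx0 hx.2 h2R
    linarith
  have hinc := sub_le_mul_log_div_add_of_hasDerivAt_le hr₁ h12.le
    (fun x hx => hderiv x (hsub hx)) hbound
  rw [log_div_rpow_sub_log_div_rpow _ (hHpos r₁ (hsub (left_mem_Icc.mpr h12.le)))
    (hHpos r₂ (hsub (right_mem_Icc.mpr h12.le))) hr₁ (hr₁.trans h12)] at hinc
  linarith

theorem stmt18 (n : ℕ) (H N O : ℝ → ℝ) (R α Cbar Cbar' C₂ M : ℝ)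
    (hR : 0 < R) (hα : -1 < α) (hCbar : 0 ≤ Cbar) (hCbar' : 1 ≤ Cbar')
    (hC₂ : 0 < C₂) (hM : 0 < M)
    (hHpos : ∀ r ∈ Set.Ioo (0 : ℝ) R, 0 < H r)
    (hO : ∀ r ∈ Set.Ioo (0 : ℝ) R, |O r| ≤ Cbar)
    (hderiv : ∀ r ∈ Set.Ioo (0 : ℝ) R,
      HasDerivAt (fun s => Real.log (H s / s ^ (2 * α + n)))
        (O r + N r / ((α + 1) * r)) r)
    (hNmono : ∀ s t : ℝ, 0 < s → s < t → t < R → N s ≤ Cbar' * (N t + C₂ * M)) :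
    ∀ r₁ r₂ : ℝ, 0 < r₁ → r₁ < r₂ → r₂ < R →
      Real.log (H r₂ / H r₁) ≤
        (2 * α + n) * Real.log (r₂ / r₁) +
          Cbar' / (α + 1) * (N r₂ + C₂ * M) * Real.log (r₂ / r₁) +
          Cbar * (r₂ - r₁) :=
  stmt18_general n H N O R α Cbar Cbar' C₂ M hα hHpos hO hderiv hNmono
end
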